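/- arXiv:1604.08303 — 7 statements merged into one kernel-verified Lean document; each statement's English description precedes it below -/
import Mathlib

section
/- Let q be a prime power, let b(x) be a polynomial of degree m ≥ 1 that is irreducible over the finite field F_q, and let α be a root of b(x) in the extension field F_{q^m}. For any positive integer d, the polynomial b(x^d) is irreducible over F_q if and only if the polynomial x^d − α is irreducible over F_{q^m}. -/
open Polynomial Module IntermediateField

/-!
Let `β` be a `d`-th root of `α` in an algebraic closure of `K`. Since `K = F(α)` and `α = β ^ d`,
the fields `F(β)` and `K(β)` coincide, so the tower law gives `deg_F β = m * deg_K β`. Both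
polynomials vanish at `β`, and a polynomial vanishing at `β` is irreducible exactly when its degree
is that of the minimal polynomial of `β`; here these degrees are `m * d` and `d`.
-/

theorem Polynomial.irreducible_iff_natDegree_minpoly_eq {F E : Type*} [Field F] [Field E]
    [Algebra F E] {p : F[X]} (hp : p ≠ 0) {x : E} (hx : aeval x p = 0) :
    Irreducible p ↔ (minpoly F x).natDegree = p.natDegree := by
  have hint : IsIntegral F x := IsAlgebraic.isIntegral ⟨p, hp, hx⟩
  refine ⟨fun hirr ↦ ?_, fun hdeg ↦ ?_⟩
  · exact natDegree_eq_of_degree_eq <| degree_eq_degree_of_associated <|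
      (minpoly.irreducible hint).associated_of_dvd hirr (minpoly.dvd F x hx)
  · exact (associated_of_dvd_of_natDegree_le (minpoly.dvd F x hx) hp hdeg.ge).irreducible
      (minpoly.irreducible hint)

theorem Module.finrank_eq_of_card_eq_pow {F K : Type*} [Field F] [Fintype F] [Field K] [Fintype K]
    [Algebra F K] {n : ℕ} (h : Fintype.card K = Fintype.card F ^ n) : finrank F K = n :=
  Nat.pow_right_injective Fintype.one_lt_card (card_eq_pow_finrank.symm.trans h)

theorem natDegree_minpoly_eq_finrank_mul {F K Ω : Type*} [Field F] [Field K] [Field Ω]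
    [Algebra F K] [Algebra K Ω] [Algebra F Ω] [IsScalarTower F K Ω] [FiniteDimensional F K]
    {α : K} (hα : F⟮α⟯ = ⊤) {β : Ω} (hβ : IsIntegral K β) (hαβ : algebraMap K Ω α ∈ F⟮β⟯) :
    (minpoly F β).natDegree = finrank F K * (minpoly K β).natDegree := by
  let ι := IsScalarTower.toAlgHom F K Ω
  have hrange : ι.fieldRange ≤ F⟮β⟯ := by
    rw [AlgHom.fieldRange_eq_map, ← hα, adjoin_map, Set.image_singleton, adjoin_simple_le_iff]
    exact hαβ
  have hrestrict : IntermediateField.restrictScalars F K⟮β⟯ = F⟮β⟯ := by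
    rw [restrictScalars_adjoin_of_algEquiv (E := Ω) ι.equivFieldRange rfl,
      restrictScalars_adjoin_eq_sup, sup_eq_right.mpr hrange]
  rw [← adjoin.finrank (isIntegral_trans β hβ), ← adjoin.finrank hβ, ← hrestrict]
  exact (finrank_mul_finrank F K K⟮β⟯).symm

theorem stmt_1_general (q m d : ℕ) (hd : 1 ≤ d)
    (F K : Type) [Field F] [Fintype F] [Field K] [Fintype K] [Algebra F K]
    (hF : Fintype.card F = q) (hK : Fintype.card K = q ^ m)
    (b : Polynomial F) (hbdeg : b.natDegree = m) (hbirr : Irreducible b)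
    (α : K) (hα : Polynomial.aeval α b = 0) :
    Irreducible (b.comp (X ^ d)) ↔ Irreducible (X ^ d - C α : Polynomial K) := by
  have hfinrank : finrank F K = m := finrank_eq_of_card_eq_pow (hF ▸ hK)
  have hgen : F⟮α⟯ = ⊤ := by
    rw [Field.primitive_element_iff_minpoly_natDegree_eq,
      (irreducible_iff_natDegree_minpoly_eq hbirr.ne_zero hα).mp hbirr, hbdeg, hfinrank]
  obtain ⟨β, hβ⟩ := IsAlgClosed.exists_pow_nat_eq (algebraMap K (AlgebraicClosure K) α) hd
  have hrootK : aeval β (X ^ d - C α) = 0 := by simp [hβ]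
  have hrootF : aeval β (b.comp (X ^ d)) = 0 := by
    simp [aeval_comp, hβ, aeval_algebraMap_apply, hα]
  have hdegF : (b.comp (X ^ d)).natDegree = m * d := by
    rw [natDegree_comp, natDegree_X_pow, hbdeg]
  have hdeg := natDegree_minpoly_eq_finrank_mul hgen
    ⟨_, monic_X_pow_sub_C α (by omega), hrootK⟩ (hβ ▸ pow_mem (mem_adjoin_simple_self F β) d)
  have hm : 0 < m := hbdeg ▸ hbirr.natDegree_pos
  have hcomp0 : b.comp (X ^ d) ≠ 0 := ne_zero_of_natDegree_gt (hdegF ▸ Nat.mul_pos hm hd)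
  rw [irreducible_iff_natDegree_minpoly_eq hcomp0 hrootF,
    irreducible_iff_natDegree_minpoly_eq (X_pow_sub_C_ne_zero hd α) hrootK, hdeg, hdegF, hfinrank,
    natDegree_X_pow_sub_C, Nat.mul_left_cancel_iff hm]

theorem stmt_1 (q m d : ℕ) (hq : IsPrimePow q) (hm : 1 ≤ m) (hd : 1 ≤ d)
    (F K : Type) [Field F] [Fintype F] [Field K] [Fintype K] [Algebra F K]
    (hF : Fintype.card F = q) (hK : Fintype.card K = q ^ m)
    (b : Polynomial F) (hbdeg : b.natDegree = m) (hbirr : Irreducible b)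
    (α : K) (hα : Polynomial.aeval α b = 0) :
    Irreducible (b.comp (X ^ d)) ↔ Irreducible (X ^ d - C α : Polynomial K) :=
  stmt_1_general q m d hd F K hF hK b hbdeg hbirr α hα
end

section
/- (Vahlen–Capelli criterion) Let F be an arbitrary field, let d be a positive integer, and let α ∈ F be nonzero. Then the polynomial x^d − α is reducible in F[x] if and only if at least one of the following holds: (1) there exist a prime divisor d' of d and an element β ∈ F with α = β^{d'}; or (2) 4 divides d and there exists a nonzero γ ∈ F with −4α = γ^4. -/
open Polynomial IntermediateField

section Aux

variable {K : Type} [Field K]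

lemma vc_coords_eq_zero {L : Type} [Field L] [Algebra K L] {g : L}
    (hint : IsIntegral K g) (hdeg : 2 ≤ (minpoly K g).natDegree) {c d : K}
    (h : algebraMap K L c + algebraMap K L d * g = 0) : c = 0 ∧ d = 0 := by
  by_cases hcd : (C d * X + C c : K[X]) = 0
  · have hc : c = 0 := by
      have := congrArg (fun p => Polynomial.coeff p 0) hcd
      simpa using this
    have hdd : d = 0 := by
      have := congrArg (fun p => Polynomial.coeff p 1) hcd
      simpa using this
    exact ⟨hc, hdd⟩
  · exfalso
    have haev : Polynomial.aeval g (C d * X + C c : K[X]) = 0 := by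
      simp only [map_add, map_mul, aeval_C, aeval_X]
      linear_combination h
    have h1 : (minpoly K g).degree ≤ (C d * X + C c : K[X]).degree :=
      minpoly.degree_le_of_ne_zero K g hcd haev
    have h2 : (C d * X + C c : K[X]).degree ≤ 1 := by
      refine le_trans (degree_add_le _ _) ?_
      simp only [max_le_iff]
      refine ⟨?_, le_trans degree_C_le (by norm_num)⟩
      simpa using (degree_C_mul_X_pow_le 1 d)
    have h3 : (2 : WithBot ℕ) ≤ (minpoly K g).degree := by
      rw [degree_eq_natDegree (minpoly.ne_zero hint)]
      exact_mod_cast hdeg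
    have := le_trans h3 (le_trans h1 h2)
    norm_num at this

/-- The hard direction of Vahlen–Capelli. -/
lemma vc_hard : ∀ (d : ℕ), ∀ (K : Type) [Field K], ∀ (a : K), 1 ≤ d → a ≠ 0 →
    (∀ p : ℕ, p.Prime → p ∣ d → ∀ b : K, b ^ p ≠ a) →
    (4 ∣ d → ∀ γ : K, γ ≠ 0 → -4 * a ≠ γ ^ 4) →
    Irreducible (X ^ d - C a) := by
  intro d
  induction d using Nat.strong_induction_on with
  | _ d IH =>
  intro K _ a hd1 ha0 ha hb4
  rcases Nat.even_or_odd d with hev | hodd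
  · -- even case
    obtain ⟨r, hr⟩ := hev
    have hdn : d = r * 2 := by omega
    subst hdn
    set n := r with hn
    have hn1 : 1 ≤ n := by omega
    have hm : Irreducible (X ^ 2 - C a) :=
      X_pow_sub_C_irreducible_of_prime Nat.prime_two (ha 2 Nat.prime_two ⟨n, by ring⟩)
    apply X_pow_mul_sub_C_irreducible hm
    intro E _ _ x hx
    have hint : IsIntegral K x := not_not.mp fun h ↦ by
      simpa only [degree_zero, degree_X_pow_sub_C (by norm_num : 0 < 2),
        WithBot.natCast_ne_bot] using congr_arg degree (hx.symm.trans (dif_neg h))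
    set L := K⟮x⟯ with hL
    set g : L := AdjoinSimple.gen K x with hgdef
    have hmin : minpoly K g = X ^ 2 - C a := by
      rw [hgdef, minpoly_gen, hx]
    have hg2 : g ^ 2 = algebraMap K L a := by
      have := minpoly.aeval K g
      rw [hmin] at this
      simp only [map_sub, map_pow, aeval_X, aeval_C, sub_eq_zero] at this
      exact this
    have hgint : IsIntegral K g :=
      ⟨X ^ 2 - C a, monic_X_pow_sub_C a (by norm_num), by
        simp [map_sub, map_pow, aeval_X, aeval_C, hg2]⟩
    have hg0 : g ≠ 0 := fun h => ha0 (by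
      have : algebraMap K L a = 0 := by rw [← hg2, h]; ring
      exact (_root_.map_eq_zero (algebraMap K L)).mp this)
    have hcoords : ∀ y : L, ∃ c d : K, y = algebraMap K L c + algebraMap K L d * g := by
      intro y
      obtain ⟨f, hfdeg, hfy⟩ := (IntermediateField.adjoin.powerBasis hint).exists_eq_aeval y
      have hdim : (IntermediateField.adjoin.powerBasis hint).dim = 2 := by
        rw [IntermediateField.adjoin.powerBasis_dim, hx, natDegree_X_pow_sub_C]
      rw [hdim] at hfdeg
      have hfd1 : f.degree ≤ 1 := by
        rcases eq_or_ne f 0 with rfl | hf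
        · simp
        · rw [degree_eq_natDegree hf]; exact_mod_cast Nat.lt_succ_iff.mp hfdeg
      refine ⟨f.coeff 0, f.coeff 1, ?_⟩
      have hgen : (IntermediateField.adjoin.powerBasis hint).gen = g := by
        rw [IntermediateField.adjoin.powerBasis_gen, hgdef]
      have hfe : y = Polynomial.aeval g (C (f.coeff 1) * X + C (f.coeff 0)) := by
        rw [hfy, hgen]
        congr 1
        exact Polynomial.eq_X_add_C_of_degree_le_one hfd1
      rw [hfe]
      simp only [map_add, map_mul, aeval_C, aeval_X]
      ring
    have key2 : ∀ c d : K, algebraMap K L c + algebraMap K L d * g = 0 → c = 0 ∧ d = 0 := by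
      intro c d h
      exact vc_coords_eq_zero hgint (by rw [hmin]; simp [natDegree_X_pow_sub_C]) h
    apply IH n (by omega) L g hn1 hg0
    · -- no p-th roots of g for primes p ∣ n
      intro p hp hpn y hy
      by_cases hp2 : p = 2
      · subst hp2
        obtain ⟨c, e, hce⟩ := hcoords y
        rw [hce] at hy
        have heq : algebraMap K L (c^2 + a*e^2) + algebraMap K L (2*c*e - 1) * g = 0 := by
          simp only [map_add, map_mul, map_pow, map_sub, map_one, map_ofNat]
          linear_combination hy - (algebraMap K L e)^2 * hg2
        obtain ⟨h1, h2⟩ := key2 _ _ heq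
        have hc0 : c ≠ 0 := by
          intro h; rw [h] at h2; norm_num at h2
        have h2' : (2:K) ≠ 0 := by
          intro h; rw [h] at h2; norm_num at h2
        have h4d : (4:ℕ) ∣ n * 2 := by
          obtain ⟨k, hk⟩ := hpn
          exact ⟨k, by omega⟩
        exact hb4 h4d (2*c) (mul_ne_zero h2' hc0)
          (by linear_combination (-16*c^2) * h1 + (4*a*(2*c*e+1)) * h2)
      · have hpodd : Odd p := hp.odd_of_ne_two hp2
        have hnorm : (Algebra.norm K y) ^ p = -a := by
          rw [← map_pow, hy, hgdef, ← IntermediateField.adjoin.powerBasis_gen hint,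
            Algebra.PowerBasis.norm_gen_eq_coeff_zero_minpoly,
            IntermediateField.adjoin.powerBasis_gen, minpoly_gen, hx]
          simp [IntermediateField.adjoin.powerBasis_dim, hx, coeff_X_pow]
        apply absurd (ha p hp (hpn.mul_right 2) (-(Algebra.norm K y)))
        rw [hpodd.neg_pow, hnorm, neg_neg]
        simp
    · -- the 4th-power condition over L
      intro h4n γ hγ hγ4
      by_cases hchar2 : (2:K) = 0
      · have h4K : (4:K) = 0 := by
          rw [show (4:K) = 2*2 by norm_num, hchar2]; ring
        have h4L : (4:L) = 0 := by
          rw [← map_ofNat (algebraMap K L) 4, h4K, map_zero]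
        rw [h4L] at hγ4
        simp only [neg_zero, zero_mul] at hγ4
        exact hγ ((pow_eq_zero_iff (n := 4) (by norm_num)).mp hγ4.symm)
      · obtain ⟨c, e, hce⟩ := hcoords γ
        obtain ⟨u, hu⟩ : ∃ u : K, u = c^2 + a*e^2 := ⟨_, rfl⟩
        obtain ⟨v, hv⟩ : ∃ v : K, v = 2*c*e := ⟨_, rfl⟩
        have hsq : γ^2 = algebraMap K L u + algebraMap K L v * g := by
          rw [hce, hu, hv]
          simp only [map_add, map_mul, map_pow, map_ofNat]
          linear_combination (algebraMap K L e)^2 * hg2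
        have hq : (algebraMap K L u + algebraMap K L v * g)^2 = -4 * g := by
          rw [← hsq, ← pow_mul]
          norm_num
          linear_combination hγ4.symm
        have heq : algebraMap K L (u^2 + a*v^2) + algebraMap K L (2*u*v + 4) * g = 0 := by
          simp only [map_add, map_mul, map_pow, map_ofNat]
          linear_combination hq - (algebraMap K L v)^2 * hg2
        obtain ⟨h1, h2⟩ := key2 _ _ heq
        have hv0 : v ≠ 0 := by
          intro h; rw [h] at h2
          simp only [mul_zero, zero_add] at h2
          have : (2:K)*2 = 0 := by linear_combination h2
          rcases mul_eq_zero.mp this with h' | h' <;> exact hchar2 h'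
        have h4d : (4:ℕ) ∣ n * 2 := by
          obtain ⟨k, hk⟩ := h4n
          exact ⟨k*2, by omega⟩
        refine hb4 h4d (2/v) (div_ne_zero hchar2 hv0) ?_
        field_simp
        linear_combination (-4*v^2) * h1 + (2*u*v - 4) * h2
  · exact X_pow_sub_C_irreducible_of_odd hodd (fun p hp hpd => ha p hp hpd)

/-- A quadratic-in-`X^m` monic trinomial is not a unit. -/
lemma vc_not_unit {m : ℕ} (hm : 1 ≤ m) (c e : K) :
    ¬ IsUnit ((X^m)^2 + C c * X^m + C e : K[X]) := by
  intro h
  rw [Polynomial.isUnit_iff_degree_eq_zero] at h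
  have hlt : (C c * X^m + C e : K[X]).degree < (X^(m*2) : K[X]).degree := by
    rw [degree_X_pow]
    refine lt_of_le_of_lt (degree_add_le _ _) ?_
    rw [max_lt_iff]
    constructor
    · exact lt_of_le_of_lt (degree_C_mul_X_pow_le m c)
        (by exact_mod_cast (by omega : m < m*2))
    · exact lt_of_le_of_lt degree_C_le
        (by exact_mod_cast (by omega : 0 < m*2))
  have hdeg : ((X^m)^2 + C c * X^m + C e : K[X]).degree = ((m*2 : ℕ) : WithBot ℕ) := by
    rw [add_assoc, ← pow_mul, degree_add_eq_left_of_degree_lt hlt, degree_X_pow]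
  rw [hdeg] at h
  have : m*2 = 0 := by exact_mod_cast h
  omega

end Aux

theorem stmt_2 (F : Type) [Field F] (d : ℕ) (hd : 1 ≤ d) (α : F) (hα : α ≠ 0) :
    ¬ Irreducible (X ^ d - C α : Polynomial F) ↔
      (∃ d' : ℕ, d'.Prime ∧ d' ∣ d ∧ ∃ β : F, α = β ^ d') ∨
      (4 ∣ d ∧ ∃ γ : F, γ ≠ 0 ∧ -4 * α = γ ^ 4) := by
  constructor
  · intro hred
    by_contra hcon
    push_neg at hcon
    obtain ⟨h1, h2⟩ := hcon
    apply hred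
    apply vc_hard d F α hd hα
    · intro p hp hpd b hb
      exact (h1 p hp hpd b) hb.symm
    · intro h4 γ hγ
      exact (h2 h4 γ hγ)
  · rintro (⟨p, hp, hpd, β, hβ⟩ | ⟨h4, γ, hγ, hγ4⟩) H
    · exact pow_ne_of_irreducible_X_pow_sub_C H hpd hp.ne_one β hβ.symm
    · obtain ⟨m, hm⟩ := h4
      have hm1 : 1 ≤ m := by omega
      have hγ4' : γ^4 ≠ 0 := pow_ne_zero _ hγ
      have h2 : (2:F) ≠ 0 := by
        intro h
        apply hγ4'
        rw [← hγ4, show (4:F) = 2*2 by norm_num, h]; ring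
      obtain ⟨e, he⟩ : ∃ e : F, e = γ^2/2 := ⟨_, rfl⟩
      have h1 : (2:F) * e = γ^2 := by rw [he, mul_comm, div_mul_cancel₀ _ h2]
      have h2' : e^2 = -α := by
        rw [he, div_pow, div_eq_iff (pow_ne_zero 2 h2)]
        linear_combination -hγ4
      have hC1 : (2:F[X]) * C e = (C γ)^2 := by
        rw [← map_ofNat (C : F →+* F[X]) 2, ← C_mul, h1, C_pow]
      have hC2 : (C e)^2 = - C α := by
        rw [← C_pow, h2', map_neg]
      have key : (X ^ d - C α : F[X]) =
          ((X^m)^2 + C γ * X^m + C e) * ((X^m)^2 + C (-γ) * X^m + C e) := by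
        rw [hm, show 4*m = (m*4) by ring, pow_mul, map_neg]
        linear_combination (-((X:F[X])^m)^2) * hC1 - hC2
      rcases H.isUnit_or_isUnit key with h | h
      · exact vc_not_unit hm1 γ e h
      · exact vc_not_unit hm1 (-γ) e h
end

section
/- Let p be a prime and d, k ≥ 1 integers satisfying condition (*): every prime divisor d' of d divides p^k − 1, and moreover either 4 does not divide d, or (4 divides d and (p ≡ 1 (mod 4) or k is even)). Then the number of elements α of the finite field F_{p^k} for which the polynomial x^d − α is irreducible over F_{p^k} is at least (p^k − 1)·(1 − Σ_{d' prime, d' | d} 1/d'), where the sum ranges over the distinct prime divisors d' of d. -/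
open Polynomial IntermediateField

universe u

theorem two_pow_aux {K : Type u} [Field K] (s : ℕ) {i : K} (hi : i ^ 2 = -1)
    {a : K} (ha : ∀ b : K, b ^ 2 ≠ a) :
    Irreducible (X ^ (2 ^ s) - C a) := by
  induction s generalizing K a with
  | zero => simpa using irreducible_X_sub_C a
  | succ s IH =>
    rw [pow_succ]
    apply X_pow_mul_sub_C_irreducible (X_pow_sub_C_irreducible_of_prime Nat.prime_two ha)
    intro E _ _ x hx
    have hint : IsIntegral K x := not_not.mp fun h ↦ by
      simpa only [degree_zero, degree_X_pow_sub_C (by norm_num : 0 < 2),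
        WithBot.natCast_ne_bot] using congr_arg degree (hx.symm.trans (dif_neg h))
    have hnorm : (Algebra.norm K) (AdjoinSimple.gen K x) = -a := by
      rw [← IntermediateField.adjoin.powerBasis_gen hint,
        Algebra.PowerBasis.norm_gen_eq_coeff_zero_minpoly]
      simp [IntermediateField.adjoin.powerBasis_gen, IntermediateField.minpoly_gen,
        IntermediateField.adjoin.powerBasis_dim, hx]
    have hi' : (algebraMap K K⟮x⟯ i) ^ 2 = -1 := by
      rw [← map_pow, hi, map_neg, map_one]
    apply IH hi'
    intro b hb
    apply ha (i * Algebra.norm K b)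
    have : (Algebra.norm K b) ^ 2 = -a := by
      rw [← map_pow, hb, hnorm]
    rw [mul_pow, hi, this]
    ring

theorem gen_irred {K : Type u} [Field K] {d : ℕ} (hd : d ≠ 0)
    (hK : ¬ (4 ∣ d) ∨ ∃ i : K, i ^ 2 = -1) {a : K}
    (ha : ∀ l : ℕ, l.Prime → l ∣ d → ∀ b : K, b ^ l ≠ a) :
    Irreducible (X ^ d - C a) := by
  obtain ⟨s, m, hm, rfl⟩ : ∃ s m, Odd m ∧ d = 2 ^ s * m :=
    ⟨d.factorization 2, d / 2 ^ d.factorization 2,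
      Nat.Coprime.odd_of_left (by
        simpa using (Nat.coprime_ordCompl Nat.prime_two hd).symm),
      (Nat.ordProj_mul_ordCompl_eq_self d 2).symm⟩
  rcases Nat.eq_zero_or_pos s with rfl | hs
  · rw [pow_zero, one_mul]
    exact X_pow_sub_C_irreducible_of_odd hm (fun l hl hld => ha l hl (by simpa using Dvd.dvd.mul_left hld 1))
  · apply X_pow_mul_sub_C_irreducible
      (X_pow_sub_C_irreducible_of_odd hm (fun l hl hld => ha l hl (Dvd.dvd.mul_left hld _)))
    intro E _ _ x hx
    have hm0 : 0 < m := hm.pos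
    have hint : IsIntegral K x := not_not.mp fun h ↦ by
      simpa only [degree_zero, degree_X_pow_sub_C hm0,
        WithBot.natCast_ne_bot] using congr_arg degree (hx.symm.trans (dif_neg h))
    have hnorm : (Algebra.norm K) (AdjoinSimple.gen K x) = a := by
      rw [← IntermediateField.adjoin.powerBasis_gen hint,
        Algebra.PowerBasis.norm_gen_eq_coeff_zero_minpoly]
      simp [IntermediateField.adjoin.powerBasis_gen, IntermediateField.minpoly_gen,
        IntermediateField.adjoin.powerBasis_dim, hx, hm0.ne', hm.neg_one_pow, (Nat.pos_iff_ne_zero.mp hm0).symm]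
    have hsq : ∀ b : K⟮x⟯, b ^ 2 ≠ AdjoinSimple.gen K x := by
      intro b hb
      apply ha 2 Nat.prime_two (Dvd.dvd.mul_right (dvd_pow_self 2 hs.ne') m) (Algebra.norm K b)
      rw [← map_pow, hb, hnorm]
    rcases Nat.lt_or_ge s 2 with hs2 | hs2
    · interval_cases s
      · simpa using X_pow_sub_C_irreducible_of_prime Nat.prime_two hsq
    · obtain ⟨i, hi⟩ : ∃ i : K, i ^ 2 = -1 := by
        rcases hK with h4 | hi
        · exact absurd (dvd_mul_of_dvd_left (by
            have : (2:ℕ)^2 ∣ 2^s := pow_dvd_pow 2 hs2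
            norm_num at this; exact this) m) h4
        · exact hi
      have hi' : (algebraMap K K⟮x⟯ i) ^ 2 = -1 := by
        rw [← map_pow, hi, map_neg, map_one]
      exact two_pow_aux s hi' hsq

theorem stmt_9 (p k d : ℕ) (hp : p.Prime) (hk : 1 ≤ k) (hd : 1 ≤ d)
    (hstar1 : ∀ d' : ℕ, d'.Prime → d' ∣ d → d' ∣ p ^ k - 1)
    (hstar2 : ¬ (4 ∣ d) ∨ (4 ∣ d ∧ (p % 4 = 1 ∨ Even k)))
    (F : Type) [Field F] [Fintype F] (hF : Fintype.card F = p ^ k) :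
    ((p ^ k - 1 : ℕ) : ℚ) * (1 - ∑ d' ∈ d.primeFactors, (1 : ℚ) / d') ≤
      (Nat.card {α : F // Irreducible (X ^ d - C α : Polynomial F)} : ℚ) := by
  classical
  set q := p ^ k with hqdef
  have hq2 : 2 ≤ q := Nat.one_lt_pow (by omega) hp.one_lt
  have hd0 : d ≠ 0 := by omega
  -- existence of a square root of -1 when 4 ∣ d
  have hK : ¬ (4 ∣ d) ∨ ∃ i : F, i ^ 2 = -1 := by
    rcases hstar2 with h | ⟨h4, hcase⟩
    · exact Or.inl h
    · right
      have hp2 : p ≠ 2 := by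
        intro hp2
        have h2d : (2:ℕ) ∣ d := dvd_trans ⟨2, rfl⟩ h4
        have := hstar1 2 Nat.prime_two h2d
        have h2k : (2:ℕ) ∣ 2 ^ k := dvd_pow_self 2 (by omega)
        have hk2 : 2 ≤ 2 ^ k := Nat.one_lt_pow (by omega) (by norm_num)
        have hqe : q = 2 ^ k := by rw [hqdef, hp2]
        omega
      have hq4 : q % 4 = 1 := by
        rcases hcase with h1 | hj
        · rw [hqdef, Nat.pow_mod, h1, one_pow]
          norm_num
        · obtain ⟨j, hj⟩ := hj
          have hqe : q = (p ^ j) ^ 2 := by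
            rw [hqdef, ← pow_mul]
            congr 1
            omega
          have hjodd : p ^ j % 2 = 1 := Nat.odd_iff.mp ((hp.odd_of_ne_two hp2).pow)
          obtain ⟨t, ht⟩ : ∃ t, p ^ j = 2 * t + 1 := ⟨p ^ j / 2, by omega⟩
          rw [hqe, ht]
          ring_nf
          omega
      obtain ⟨i, hi⟩ := FiniteField.isSquare_neg_one_iff.mpr (by rw [hF]; omega)
      exact ⟨i, by rw [sq]; exact hi.symm⟩
  -- finsets
  let T : ℕ → Finset F := fun l => (Finset.univ.filter (fun x : F => x ≠ 0)).image (· ^ l)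
  let bad : Finset F := insert 0 (d.primeFactors.biUnion T)
  let good : Finset F := Finset.univ.filter (fun α : F => Irreducible (X ^ d - C α))
  have hcover : (Finset.univ : Finset F) ⊆ good ∪ bad := by
    intro α _
    by_cases hb : α ∈ bad
    · exact Finset.mem_union_right _ hb
    · refine Finset.mem_union_left _ (Finset.mem_filter.mpr ⟨Finset.mem_univ _,
        gen_irred hd0 hK ?_⟩)
      intro l hl hld b hbl
      rcases eq_or_ne b 0 with rfl | hb0
      · exact hb (by rw [← hbl, zero_pow hl.ne_zero]; exact Finset.mem_insert_self 0 _)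
      · exact hb (Finset.mem_insert_of_mem (Finset.mem_biUnion.mpr
          ⟨l, Nat.mem_primeFactors.mpr ⟨hl, hld, hd0⟩,
            Finset.mem_image.mpr ⟨b, Finset.mem_filter.mpr ⟨Finset.mem_univ _, hb0⟩, hbl⟩⟩))
  -- cardinality of the power images
  have hT : ∀ l ∈ d.primeFactors, (T l).card ≤ (q - 1) / l := by
    intro l hl
    obtain ⟨hlp, hld, -⟩ := Nat.mem_primeFactors.mp hl
    have hlq : l ∣ q - 1 := hstar1 l hlp hld
    have hcardu : Nat.card Fˣ = q - 1 := by
      rw [Nat.card_eq_fintype_card, Fintype.card_units, hF]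
    set f : Fˣ →* Fˣ := powMonoidHom l with hf
    obtain ⟨g, hg⟩ := IsCyclic.exists_ofOrder_eq_natCard (α := Fˣ)
    rw [hcardu] at hg
    have horder : orderOf (g ^ ((q - 1) / l)) = l := by
      rw [orderOf_pow, hg, Nat.gcd_eq_right (Nat.div_dvd_of_dvd hlq),
        Nat.div_div_self hlq (by omega)]
    have hker : l ≤ Nat.card f.ker := by
      calc l = Nat.card (Subgroup.zpowers (g ^ ((q - 1) / l))) := by
              rw [Nat.card_zpowers, horder]
        _ ≤ Nat.card f.ker := Subgroup.card_le_of_le (by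
              intro y hy
              obtain ⟨j, rfl⟩ := Subgroup.mem_zpowers_iff.mp hy
              have hl1 : (g ^ ((q - 1) / l)) ^ l = 1 := by
                have h0 := pow_orderOf_eq_one (g ^ ((q - 1) / l))
                rwa [horder] at h0
              rw [MonoidHom.mem_ker, hf, powMonoidHom_apply, ← zpow_natCast, ← zpow_mul,
                mul_comm, zpow_mul, zpow_natCast, hl1, one_zpow])
    have hprod : Nat.card f.range * Nat.card f.ker = q - 1 := by
      rw [← hcardu, ← Nat.card_congr (QuotientGroup.quotientKerEquivRange f).toEquiv]
      exact (Subgroup.card_eq_card_quotient_mul_card_subgroup f.ker).symm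
    have hrange : Nat.card f.range ≤ (q - 1) / l := by
      rw [Nat.le_div_iff_mul_le hlp.pos]
      calc Nat.card f.range * l ≤ Nat.card f.range * Nat.card f.ker :=
            Nat.mul_le_mul_left _ hker
        _ = q - 1 := hprod
    have hsub : T l ⊆ Finset.univ.image (fun u : Fˣ => ((f u : Fˣ) : F)) := by
      intro x hx
      obtain ⟨b, hb, rfl⟩ := Finset.mem_image.mp hx
      have hb0 : b ≠ 0 := (Finset.mem_filter.mp hb).2
      exact Finset.mem_image.mpr ⟨Units.mk0 b hb0, Finset.mem_univ _,
        by simp [hf, powMonoidHom_apply]⟩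
    calc (T l).card ≤ (Finset.univ.image (fun u : Fˣ => ((f u : Fˣ) : F))).card :=
          Finset.card_le_card hsub
      _ ≤ (Finset.univ.image (f : Fˣ → Fˣ)).card := by
          have : Finset.univ.image (fun u : Fˣ => ((f u : Fˣ) : F))
              = (Finset.univ.image (f : Fˣ → Fˣ)).image (fun u : Fˣ => (u : F)) := by
            rw [Finset.image_image]; rfl
          rw [this]
          exact Finset.card_image_le
      _ = Nat.card f.range := by
          have h1 : Set.range (f : Fˣ → Fˣ) = ↑(Finset.univ.image (f : Fˣ → Fˣ)) := by
            ext y; simp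
          calc (Finset.univ.image (f : Fˣ → Fˣ)).card
              = (↑(Finset.univ.image (f : Fˣ → Fˣ)) : Set Fˣ).ncard :=
                (Set.ncard_coe_finset _).symm
            _ = (Set.range (f : Fˣ → Fˣ)).ncard := by rw [h1]
            _ = Nat.card (Set.range (f : Fˣ → Fˣ)) := (Nat.card_coe_set_eq _).symm
            _ = Nat.card f.range := by rw [← MonoidHom.coe_range]; exact rfl
      _ ≤ (q - 1) / l := hrange
  -- counting
  have hgood : q ≤ good.card + 1 + ∑ l ∈ d.primeFactors, (q - 1) / l := by
    have h1 : (Finset.univ : Finset F).card ≤ good.card + bad.card :=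
      le_trans (Finset.card_le_card hcover) (Finset.card_union_le _ _)
    have h2 : bad.card ≤ 1 + ∑ l ∈ d.primeFactors, (q - 1) / l := by
      refine le_trans (Finset.card_insert_le _ _) ?_
      have h3 := Finset.card_biUnion_le (s := d.primeFactors) (t := T)
      have h4 := Finset.sum_le_sum hT
      omega
    rw [Finset.card_univ, hF] at h1
    omega
  have hcard : (Nat.card {α : F // Irreducible (X ^ d - C α : Polynomial F)} : ℕ) = good.card := by
    rw [Nat.card_eq_fintype_card]
    exact Fintype.card_subtype _
  have e1 : ((q - 1 : ℕ) : ℚ) = (q : ℚ) - 1 := by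
    rw [Nat.cast_sub (by omega)]; norm_num
  have hN : ((∑ l ∈ d.primeFactors, (q - 1) / l : ℕ) : ℚ)
      ≤ ∑ l ∈ d.primeFactors, ((q : ℚ) - 1) / l := by
    rw [Nat.cast_sum]
    refine Finset.sum_le_sum ?_
    intro l hl
    refine le_trans Nat.cast_div_le ?_
    rw [e1]
  have hsum : ((q : ℚ) - 1) * (1 - ∑ l ∈ d.primeFactors, (1 : ℚ) / l)
      = ((q : ℚ) - 1) - ∑ l ∈ d.primeFactors, ((q : ℚ) - 1) / l := by
    rw [mul_sub, mul_one, Finset.mul_sum]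
    congr 1
    exact Finset.sum_congr rfl fun l _ => mul_one_div _ _
  rw [hcard, e1, hsum]
  have hg' : (q : ℚ) ≤ (good.card : ℚ) + 1 + ((∑ l ∈ d.primeFactors, (q - 1) / l : ℕ) : ℚ) := by
    exact_mod_cast hgood
  linarith
end

section
/- Let p be an odd prime and k ≥ 1 an integer such that p ≡ 1 (mod 4) or k is even. Then the number of elements α of the finite field F_{p^k} for which the polynomial x^4 − α is irreducible over F_{p^k} is exactly (p^k − 1)/2. -/
/-!
Write `q = p ^ k`; the hypotheses say exactly that `q ≡ 1 (mod 4)`. If `a = b ^ 2` then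
`X ^ 4 - a = (X ^ 2 - b) (X ^ 2 + b)`. Conversely, if `a` is not a square, `X ^ 2 - a` is
irreducible, and by the tower criterion `X ^ 4 - a` is irreducible as soon as `√a` is not a square
in `F(√a) ≅ 𝔽_{q²}`. A fourth root `β` of `a` there would give
`1 = β ^ (q² - 1) = (a ^ ((q - 1) / 2)) ^ ((q + 1) / 2) = (-1) ^ ((q + 1) / 2) = -1`,
as `(q + 1) / 2` is odd. So the count is the number of non-squares, `(q - 1) / 2`: they are the
units outside the kernel of `u ↦ u ^ ((q - 1) / 2)`, which has `(q - 1) / 2` elements.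
-/

open Polynomial IntermediateField

theorem Nat.pow_mod_four_eq_one {p k : ℕ} (hp : Odd p) (h : p % 4 = 1 ∨ Even k) :
    p ^ k % 4 = 1 := by
  rcases h with h | ⟨j, rfl⟩
  · norm_num [Nat.pow_mod, h]
  · have hsq : p ^ 2 % 4 = 1 := by
      have : p % 4 = 1 ∨ p % 4 = 3 := by have := Nat.odd_iff.mp hp; omega
      rw [Nat.pow_mod]; rcases this with h | h <;> rw [h]
    norm_num [← two_mul, pow_mul, Nat.pow_mod, hsq]

theorem Polynomial.irreducible_X_sq_sub_C {K : Type*} [Field K] {c : K} (hc : ¬IsSquare c) :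
    Irreducible (X ^ 2 - C c) :=
  X_pow_sub_C_irreducible_of_prime Nat.prime_two fun b hb => hc ⟨b, by rw [← hb, sq]⟩

namespace FiniteField

variable {F : Type*} [Field F] [Fintype F]

theorem ringChar_ne_two_of_card_mod_four (hq : Fintype.card F % 4 = 1) : ringChar F ≠ 2 :=
  fun h => by have := even_card_of_char_two h; omega

theorem pow_card_div_two_eq_neg_one (hF : ringChar F ≠ 2) {a : F} (ha : ¬IsSquare a) :
    a ^ (Fintype.card F / 2) = -1 := by
  have ha0 : a ≠ 0 := by rintro rfl; exact ha .zero
  exact (pow_dichotomy hF ha0).resolve_left fun h => ha ((isSquare_iff hF ha0).mpr h)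

theorem card_not_isSquare (hF : ringChar F ≠ 2) :
    Nat.card {a : F // ¬IsSquare a} = Fintype.card F / 2 := by
  classical
  set m := Fintype.card F / 2
  have hq : Fintype.card F = 2 * m + 1 := by have := odd_card_of_char_ne_two hF; omega
  let H := (powMonoidHom m : Fˣ →* Fˣ).ker
  have e : {a : F // ¬IsSquare a} ≃ {u : Fˣ // u ∉ H} :=
    (Equiv.subtypeSubtypeEquivSubtype (p := (· ≠ 0)) fun {a} ha => by
        rintro rfl; exact ha .zero).symm.trans <|
      (unitsEquivNeZero (G₀ := F)).symm.subtypeEquiv fun a => by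
        simp [H, m, Units.ext_iff, isSquare_iff hF a.2]
  have hH : Nat.card H = m := by
    rw [IsCyclic.card_powMonoidHom_ker, Nat.card_units, Nat.card_eq_fintype_card, hq]
    simp
  rw [Nat.card_congr e, Nat.card_eq_fintype_card, Fintype.card_subtype_compl,
    ← Nat.card_eq_fintype_card, ← Nat.card_eq_fintype_card, hH, Nat.card_units,
    Nat.card_eq_fintype_card, hq]
  omega

theorem pow_four_ne_algebraMap_of_not_isSquare {E : Type*} [Field E] [Algebra F E]
    (hq : Fintype.card F % 4 = 1) (hE : Module.finrank F E = 2) {a : F} (ha : ¬IsSquare a)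
    (b : E) : b ^ 4 ≠ algebraMap F E a := by
  intro hb
  have hF := ringChar_ne_two_of_card_mod_four hq
  have : Module.Finite F E := Module.finite_of_finrank_eq_succ hE
  have : Finite E := Module.finite_of_finite F
  have := Fintype.ofFinite E
  set m := Fintype.card F / 2
  have hm : Even m := ⟨Fintype.card F / 4, by omega⟩
  have hcard : Fintype.card E - 1 = 4 * (m * (m + 1)) := by
    rw [Module.card_eq_pow_finrank (K := F), hE]
    have : Fintype.card F = 2 * m + 1 := by omega
    rw [this]; ring_nf; omega
  have hb0 : b ≠ 0 := by
    rintro rfl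
    have ha0 : a ≠ 0 := by rintro rfl; exact ha .zero
    exact ha0 ((map_eq_zero_iff _ (algebraMap F E).injective).mp (by simpa using hb.symm))
  have h1 : algebraMap F E (a ^ (m * (m + 1))) = 1 := by
    rw [map_pow, ← hb, ← pow_mul, ← hcard, pow_card_sub_one_eq_one b hb0]
  have h2 : a ^ (m * (m + 1)) = -1 := by
    rw [pow_mul, pow_card_div_two_eq_neg_one hF ha, hm.add_one.neg_one_pow]
  rw [h2, map_neg, map_one] at h1
  exact Ring.neg_one_ne_one_of_char_ne_two hF ((algebraMap F E).injective (by simpa using h1))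

theorem irreducible_X_pow_four_sub_C_iff (hq : Fintype.card F % 4 = 1) {a : F} :
    Irreducible (X ^ 4 - C a) ↔ ¬IsSquare a := by
  refine ⟨fun h ⟨b, hb⟩ => pow_ne_of_irreducible_X_pow_sub_C h (m := 2) (by norm_num)
    (by norm_num) b (by rw [hb, sq]), fun ha => ?_⟩
  refine X_pow_mul_sub_C_irreducible (n := 2) (irreducible_X_sq_sub_C ha)
    fun E _ _ x hx => irreducible_X_sq_sub_C ?_
  rintro ⟨b, hb⟩
  have hint : IsIntegral F x := by
    by_contra h
    simpa [minpoly.eq_zero h] using congrArg natDegree hx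
  have hgen : AdjoinSimple.gen F x ^ 2 = algebraMap F F⟮x⟯ a := by
    have := aeval_gen_minpoly F x
    rwa [hx, map_sub, map_pow, aeval_X, aeval_C, sub_eq_zero] at this
  refine pow_four_ne_algebraMap_of_not_isSquare hq ?_ ha b ?_
  · rw [adjoin.finrank hint, hx, natDegree_X_pow_sub_C]
  · rw [← hgen, hb]; ring

end FiniteField

theorem stmt_12_general (p k : ℕ) (hpodd : Odd p)
    (h : p % 4 = 1 ∨ Even k)
    (F : Type) [Field F] [Fintype F] (hF : Fintype.card F = p ^ k) :
    Nat.card {α : F // Irreducible (X ^ 4 - C α : Polynomial F)} = (p ^ k - 1) / 2 := by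
  have hq : Fintype.card F % 4 = 1 := hF ▸ Nat.pow_mod_four_eq_one hpodd h
  rw [Nat.card_congr (Equiv.subtypeEquivRight fun a =>
      FiniteField.irreducible_X_pow_four_sub_C_iff hq),
    FiniteField.card_not_isSquare (FiniteField.ringChar_ne_two_of_card_mod_four hq), ← hF]
  omega

theorem stmt_12 (p k : ℕ) (hp : p.Prime) (hpodd : Odd p) (hk : 1 ≤ k)
    (h : p % 4 = 1 ∨ Even k)
    (F : Type) [Field F] [Fintype F] (hF : Fintype.card F = p ^ k) :
    Nat.card {α : F // Irreducible (X ^ 4 - C α : Polynomial F)} = (p ^ k - 1) / 2 :=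
  stmt_12_general p k hpodd h F hF
end

section
/- Let p be an odd prime and k ≥ 1 an integer such that 3 divides p^k − 1. Then the number of elements α of the finite field F_{p^k} for which the polynomial x^6 − α is irreducible over F_{p^k} is at least (p^k − 1)/6. -/
open Polynomial IntermediateField

theorem X_pow_six_sub_C_irreducible {K : Type} [Field K] {a : K}
    (h2 : ∀ b : K, b ^ 2 ≠ a) (h3 : ∀ b : K, b ^ 3 ≠ a) :
    Irreducible (X ^ 6 - C a) := by
  have h6 : (6 : ℕ) = 3 * 2 := rfl
  rw [h6]
  apply X_pow_mul_sub_C_irreducible (X_pow_sub_C_irreducible_of_prime Nat.prime_two h2)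
  intro E _ _ x hx
  have hint : IsIntegral K x := not_not.mp fun h ↦ by
    simpa only [degree_zero, degree_X_pow_sub_C (by norm_num : 0 < 2),
      WithBot.natCast_ne_bot] using congr_arg degree (hx.symm.trans (dif_neg h))
  apply X_pow_sub_C_irreducible_of_prime Nat.prime_three
  intro b hb
  apply h3 (-(Algebra.norm K b))
  have key : (Algebra.norm K) b ^ 3 = -a := by
    rw [← map_pow, hb, ← adjoin.powerBasis_gen hint,
      Algebra.PowerBasis.norm_gen_eq_coeff_zero_minpoly]
    simp [minpoly_gen, hx]
  rw [neg_pow, key]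
  ring

theorem stmt_13 (p k : ℕ) (hp : p.Prime) (hpodd : Odd p) (hk : 1 ≤ k)
    (h3 : 3 ∣ p ^ k - 1)
    (F : Type) [Field F] [Fintype F] (hF : Fintype.card F = p ^ k) :
    (p ^ k - 1) / 6 ≤ Nat.card {α : F // Irreducible (X ^ 6 - C α : Polynomial F)} := by
  classical
  set q := p ^ k with hq
  have hq2 : 2 ≤ q := le_trans hp.two_le (Nat.le_self_pow (by omega) p)
  obtain ⟨g, hg⟩ := IsCyclic.exists_generator (α := Fˣ)
  have hord : orderOf g = q - 1 := by
    rw [orderOf_eq_card_of_forall_mem_zpowers hg, Nat.card_eq_fintype_card,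
      Fintype.card_units, hF]
  have hqodd : Odd q := hpodd.pow
  have h2 : 2 ∣ q - 1 := by
    obtain ⟨m, hm⟩ := hqodd; omega
  -- key: for i with gcd(i,6)=1, g^i gives an irreducible X^6 - C (g^i)
  have key : ∀ i : ℕ, ¬ 2 ∣ i → ¬ 3 ∣ i →
      Irreducible (X ^ 6 - C ((g : F) ^ i)) := by
    intro i hi2 hi3
    have hpow : ∀ (e : ℕ), e ∣ q - 1 → ∀ b : F, b ^ e ≠ (g : F) ^ i → True := fun _ _ _ _ => trivial
    have main : ∀ (e : ℕ), 0 < e → e ∣ q - 1 → ¬ (e ∣ i) → ∀ b : F, b ^ e ≠ (g : F) ^ i := by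
      intro e he hediv hei b hb
      have hbne : b ≠ 0 := by
        intro h0
        rw [h0, zero_pow (by omega)] at hb
        exact (pow_ne_zero i (Units.ne_zero g)) hb.symm
      obtain ⟨m, hm⟩ := hg (Units.mk0 b hbne)
      have : (g ^ m) ^ (e : ℤ) = g ^ (i : ℤ) := by
        apply Units.ext
        push_cast [hm]
        simpa using hb
      have h1 : g ^ (m * e - (i : ℤ)) = 1 := by
        rw [zpow_sub, zpow_mul, this]
        simp
      have hdvd : ((q - 1 : ℕ) : ℤ) ∣ (m * e - i) := by
        rw [← hord]
        exact orderOf_dvd_iff_zpow_eq_one.mpr h1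
      obtain ⟨c, hc⟩ := hdvd
      apply hei
      have : (e : ℤ) ∣ (i : ℤ) := by
        obtain ⟨d, hd⟩ := hediv
        refine ⟨m - c * d, ?_⟩
        have : ((q-1:ℕ):ℤ) = e * d := by exact_mod_cast hd
        linear_combination -hc - c * this
      exact_mod_cast this
    apply X_pow_six_sub_C_irreducible
    · exact main 2 (by norm_num) h2 hi2
    · exact main 3 (by norm_num) h3 hi3
  -- injection from Fin ((q-1)/6)
  have : ∀ j : Fin ((q - 1) / 6), Irreducible (X ^ 6 - C ((g : F) ^ (6 * (j : ℕ) + 1))) := by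
    intro j
    exact key _ (by omega) (by omega)
  let f : Fin ((q - 1) / 6) → {α : F // Irreducible (X ^ 6 - C α : Polynomial F)} :=
    fun j => ⟨(g : F) ^ (6 * (j : ℕ) + 1), this j⟩
  have hinj : Function.Injective f := by
    intro j j' hjj
    have : (g : F) ^ (6 * (j : ℕ) + 1) = (g : F) ^ (6 * (j' : ℕ) + 1) := congrArg Subtype.val hjj
    have hu : g ^ (6 * (j : ℕ) + 1) = g ^ (6 * (j' : ℕ) + 1) := by
      apply Units.ext; push_cast; exact this
    rw [pow_inj_mod, hord] at hu
    have hj := j.isLt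
    have hj' := j'.isLt
    have h6j : 6 * (j : ℕ) + 1 < q - 1 := by omega
    have h6j' : 6 * (j' : ℕ) + 1 < q - 1 := by omega
    rw [Nat.mod_eq_of_lt h6j, Nat.mod_eq_of_lt h6j'] at hu
    exact Fin.ext (by omega)
  calc (q - 1) / 6 = Nat.card (Fin ((q - 1) / 6)) := by simp
    _ ≤ _ := Nat.card_le_card_of_injective f hinj
end

section
/- Let p be a prime, let b(x) be a polynomial of degree k ≥ 1 that is irreducible over F_p, and let α be a root of b(x) in the extension field F_{p^k}. Let d ≥ 1 be an integer satisfying condition (*): every prime divisor d' of d divides p^k − 1, and either 4 does not divide d, or (4 divides d and (p ≡ 1 (mod 4) or k is even)). If for every prime divisor d' of d the root α is not a d'-th power in F_{p^k} (i.e., α ≠ β^{d'} for all β ∈ F_{p^k}), then the polynomial b(x^d) is irreducible over F_p. -/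
open Polynomial IntermediateField Module

private theorem aux_T : ∀ d : ℕ, 1 ≤ d → ∀ (K : Type) [Field K] [Fintype K], ∀ α : K,
    (4 ∣ d → Fintype.card K % 4 = 1) →
    (∀ r : ℕ, r.Prime → r ∣ d → ∀ β : K, α ≠ β ^ r) →
    Irreducible (X ^ d - C α : Polynomial K) := by
  intro d
  induction d using Nat.strong_induction_on with
  | _ d IH =>
    intro hd K _ _ α h4 hnp
    rcases eq_or_lt_of_le hd with h1 | h2
    · rw [← h1, pow_one]
      exact irreducible_X_sub_C α
    · have hr : d.minFac.Prime := Nat.minFac_prime (by omega)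
      set r := d.minFac with hrdef
      obtain ⟨d', hdd'⟩ := d.minFac_dvd
      have hd'pos : 1 ≤ d' := Nat.pos_of_ne_zero (by rintro rfl; simp at hdd'; omega)
      have hd'lt : d' < d := by
        calc d' < 2 * d' := by omega
        _ ≤ r * d' := Nat.mul_le_mul_right _ hr.two_le
        _ = d := hdd'.symm
      have hdrw : d = d' * r := by rw [hdd', Nat.mul_comm]
      rw [hdrw]
      apply X_pow_mul_sub_C_irreducible
        (X_pow_sub_C_irreducible_of_prime hr
          (fun β h => hnp r hr ⟨d', hdd'⟩ β h.symm))
      intro E _ _ x hx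
      have hint : IsIntegral K x := not_not.mp fun h ↦ by
        simpa only [degree_zero, degree_X_pow_sub_C hr.pos, WithBot.natCast_ne_bot]
          using congr_arg degree (hx.symm.trans (dif_neg h))
      haveI : FiniteDimensional K K⟮x⟯ := adjoin.finiteDimensional hint
      haveI : Finite K⟮x⟯ := Module.finite_of_finite K
      haveI : Fintype K⟮x⟯ := Fintype.ofFinite _
      have hfr : Module.finrank K K⟮x⟯ = r := by
        rw [adjoin.finrank hint, hx, natDegree_X_pow_sub_C]
      have hcard : Fintype.card K⟮x⟯ = Fintype.card K ^ r := by
        rw [card_eq_pow_finrank (K := K) (V := K⟮x⟯), hfr]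
      have hmin : minpoly K (AdjoinSimple.gen K x) = X ^ r - C α := by
        rw [minpoly_gen, hx]
      have hnorm : Algebra.norm K (AdjoinSimple.gen K x) = (-1) ^ r * (-α) := by
        rw [← adjoin.powerBasis_gen hint, Algebra.PowerBasis.norm_gen_eq_coeff_zero_minpoly,
          adjoin.powerBasis_gen, hmin, adjoin.powerBasis_dim, hx, natDegree_X_pow_sub_C]
        simp [coeff_X_pow, (Nat.pos_iff_ne_zero.mp hr.pos).symm, hr.pos.ne']
      apply IH d' hd'lt hd'pos K⟮x⟯ (AdjoinSimple.gen K x)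
      · intro h4d'
        have h4d : 4 ∣ d := hdrw ▸ Dvd.dvd.mul_right h4d' r
        rw [hcard, Nat.pow_mod, h4 h4d, one_pow]
        norm_num
      · intro s hs hsd' δ hEq
        have hsd : s ∣ d := hdrw ▸ Dvd.dvd.mul_right hsd' r
        set c := Algebra.norm K δ with hc
        have hkey : c ^ s = (-1) ^ r * (-α) := by
          rw [hc, ← map_pow, ← hEq, hnorm]
        rcases hs.eq_two_or_odd' with hs2 | hsodd
        · subst hs2
          rcases hr.eq_two_or_odd' with hr2 | hrodd
          · -- r = 2, s = 2, so 4 ∣ d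
            have h4d : 4 ∣ d := by
              obtain ⟨m, hm⟩ := hsd'
              exact ⟨m, by rw [hdrw, hm, hr2]; ring⟩
            obtain ⟨j, hj⟩ : IsSquare (-1 : K) :=
              FiniteField.isSquare_neg_one_iff.mpr (by rw [h4 h4d]; omega)
            apply hnp 2 Nat.prime_two (dvd_trans ⟨2, by norm_num⟩ h4d) (j * c)
            rw [hr2] at hkey
            linear_combination hkey + c ^ 2 * hj
          · -- r odd, s = 2
            apply hnp 2 Nat.prime_two hsd c
            rw [hrodd.neg_one_pow] at hkey
            linear_combination -hkey
        · -- s odd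
          rcases neg_one_pow_eq_or K r with h1 | h1
          · apply hnp s hs hsd (-c)
            rw [hsodd.neg_pow]
            rw [h1] at hkey
            linear_combination hkey
          · apply hnp s hs hsd c
            rw [h1] at hkey
            linear_combination -hkey

theorem stmt_14 (p k d : ℕ) (hp : p.Prime) (hk : 1 ≤ k) (hd : 1 ≤ d)
    (F K : Type) [Field F] [Fintype F] [Field K] [Fintype K] [Algebra F K]
    (hF : Fintype.card F = p) (hK : Fintype.card K = p ^ k)
    (b : Polynomial F) (hbdeg : b.natDegree = k) (hbirr : Irreducible b)
    (α : K) (hroot : Polynomial.aeval α b = 0)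
    (hstar1 : ∀ d' : ℕ, d'.Prime → d' ∣ d → d' ∣ p ^ k - 1)
    (hstar2 : ¬ (4 ∣ d) ∨ (4 ∣ d ∧ (p % 4 = 1 ∨ Even k)))
    (hnp : ∀ d' : ℕ, d'.Prime → d' ∣ d → ∀ β : K, α ≠ β ^ d') :
    Irreducible (b.comp (X ^ d)) := by
  classical
  have hb0 : b ≠ 0 := hbirr.ne_zero
  have hlc : b.leadingCoeff ≠ 0 := leadingCoeff_ne_zero.mpr hb0
  have hu : IsUnit (C b.leadingCoeff⁻¹) :=
    isUnit_C.mpr (isUnit_iff_ne_zero.mpr (inv_ne_zero hlc))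
  set b' := b * C b.leadingCoeff⁻¹ with hb'
  have hassoc : Associated b b' := ⟨hu.unit, by rw [IsUnit.unit_spec]⟩
  have hb'monic : b'.Monic := monic_mul_leadingCoeff_inv hb0
  have hb'irr : Irreducible b' := hassoc.irreducible hbirr
  have hb'deg : b'.natDegree = k := by
    rw [hb', natDegree_mul_C (inv_ne_zero hlc), hbdeg]
  -- 4 ∣ d → p ^ k % 4 = 1
  have h4 : 4 ∣ d → p ^ k % 4 = 1 := by
    intro h4d
    have h2 : (2 : ℕ) ∣ p ^ k - 1 := hstar1 2 Nat.prime_two (dvd_trans ⟨2, by norm_num⟩ h4d)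
    have hpk1 : 1 ≤ p ^ k := Nat.one_le_pow _ _ hp.pos
    have hpodd : p % 2 = 1 := by
      by_contra h
      have hp2' : p % 2 = 0 := by omega
      have : p ^ k % 2 = 0 := by
        rw [Nat.pow_mod, hp2', Nat.zero_pow (by omega)]
      omega
    rcases hstar2 with hno4 | ⟨_, hcase⟩
    · exact absurd h4d hno4
    rcases hcase with hp4 | ⟨m, hm⟩
    · rw [Nat.pow_mod, hp4, one_pow]; norm_num
    · have hp4' : p ^ 2 % 4 = 1 := by
        obtain ⟨t, ht⟩ : ∃ t, p = 2 * t + 1 := ⟨p / 2, by omega⟩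
        have : p ^ 2 = 4 * (t * t + t) + 1 := by rw [ht]; ring
        omega
      have hk2 : p ^ k = (p ^ 2) ^ m := by
        rw [← pow_mul]; congr 1; omega
      rw [hk2, Nat.pow_mod, hp4', one_pow]; norm_num
  suffices h : Irreducible (b'.comp (X ^ d)) by
    have hcomp : b'.comp (X ^ d) = b.comp (X ^ d) * C b.leadingCoeff⁻¹ := by
      rw [hb', mul_comp, C_comp]
    have : Associated (b.comp (X ^ d)) (b'.comp (X ^ d)) :=
      ⟨hu.unit, by rw [IsUnit.unit_spec, ← hcomp]⟩
    exact this.symm.irreducible h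
  apply Polynomial.irreducible_comp hb'monic (monic_X_pow d) hb'irr
  intro E _ _ x hx
  rw [Polynomial.map_pow, map_X]
  have hint : IsIntegral F x := by
    by_contra h
    exact hb'monic.ne_zero (hx ▸ minpoly.eq_zero h)
  haveI : FiniteDimensional F F⟮x⟯ := adjoin.finiteDimensional hint
  haveI : Finite F⟮x⟯ := Module.finite_of_finite F
  haveI : Fintype F⟮x⟯ := Fintype.ofFinite _
  have hfr : Module.finrank F F⟮x⟯ = k := by
    rw [adjoin.finrank hint, hx, hb'deg]
  have hcard : Fintype.card F⟮x⟯ = p ^ k := by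
    rw [card_eq_pow_finrank (K := F) (V := F⟮x⟯), hF, hfr]
  have haeval : aeval α (minpoly F ((adjoin.powerBasis hint).gen)) = 0 := by
    rw [adjoin.powerBasis_gen, minpoly_gen, hx, hb', map_mul, hroot, zero_mul]
  let φ := (adjoin.powerBasis hint).lift α haeval
  have hφgen : φ (AdjoinSimple.gen F x) = α := by
    have := PowerBasis.lift_gen (adjoin.powerBasis hint) α haeval
    rwa [adjoin.powerBasis_gen] at this
  apply aux_T d hd F⟮x⟯ (AdjoinSimple.gen F x)
  · intro h4d
    rw [hcard]
    exact h4 h4d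
  · intro s hs hsd β hEq
    apply hnp s hs hsd (φ β)
    rw [← hφgen, hEq, map_pow]
end

section
/- Let q be a prime power, let b(x) be a polynomial of degree m ≥ 1 that is irreducible over the finite field F_q, let α be a root of b(x) in F_{q^m}, and let d ≥ 1. If the polynomial x^d − α is reducible over F_{q^m}, then b(x^d) is reducible over F_q; in particular, b(x^d) has a (monic) proper factor in F_q[x] of degree m·d₁ for some divisor degree d₁ < d equal to the degree of an irreducible factor of x^d − α over F_{q^m}. -/
open IntermediateField


open Polynomial

theorem stmt_16 (q m d : ℕ) (hq : IsPrimePow q) (hm : 1 ≤ m) (hd : 1 ≤ d)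
    (F K : Type) [Field F] [Fintype F] [Field K] [Fintype K] [Algebra F K]
    (hF : Fintype.card F = q) (hK : Fintype.card K = q ^ m)
    (b : Polynomial F) (hbdeg : b.natDegree = m) (hbirr : Irreducible b)
    (α : K) (hroot : Polynomial.aeval α b = 0)
    (hred : ¬ Irreducible (X ^ d - C α : Polynomial K)) :
    ¬ Irreducible (b.comp (X ^ d)) ∧
      ∃ d₁ : ℕ, d₁ < d ∧
        (∃ τ : Polynomial K, Irreducible τ ∧ τ ∣ (X ^ d - C α) ∧ τ.natDegree = d₁) ∧
        ∃ f : Polynomial F, f.Monic ∧ f ∣ b.comp (X ^ d) ∧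
          f.natDegree = m * d₁ ∧ 0 < f.natDegree ∧
          f.natDegree < (b.comp (X ^ d)).natDegree := by
  classical
  have hq1 : 1 < q := hq.one_lt
  set P : Polynomial K := X ^ d - C α with hPdef
  have hPdeg : P.natDegree = d := natDegree_X_pow_sub_C
  have hP0 : P ≠ 0 := fun h => by simp [h] at hPdeg; omega
  -- get an irreducible factor τ of P
  obtain ⟨τ, hτirr, hτdvd⟩ :=
    Polynomial.exists_irreducible_of_natDegree_pos (f := P) (by omega)
  set d₁ := τ.natDegree with hd₁def
  have hd₁pos : 0 < d₁ := hτirr.natDegree_pos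
  have hτ0 : τ ≠ 0 := hτirr.ne_zero
  -- d₁ < d
  have hd₁lt : d₁ < d := by
    obtain ⟨c, hc⟩ := hτdvd
    have hc0 : c ≠ 0 := fun h => hP0 (by rw [hc, h, mul_zero])
    have hdeg : d = d₁ + c.natDegree := by
      rw [← hPdeg, hc, natDegree_mul hτ0 hc0]
    rcases Nat.eq_zero_or_pos c.natDegree with h0 | hpos
    · exfalso
      have hcu : IsUnit c := by
        obtain ⟨a, rfl⟩ := Polynomial.natDegree_eq_zero.mp h0
        exact isUnit_C.mpr (isUnit_iff_ne_zero.mpr (fun h => hc0 (by rw [h, map_zero])))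
      have hassoc : Associated τ P := ⟨hcu.unit, by rw [hcu.unit_spec, ← hc]⟩
      exact hred (hassoc.irreducible hτirr)
    · omega
  -- work in K' = AdjoinRoot τ
  haveI : Fact (Irreducible τ) := ⟨hτirr⟩
  set K' := AdjoinRoot τ with hK'def
  set β : K' := AdjoinRoot.root τ with hβdef
  have hβP : aeval β P = 0 := by
    rw [AdjoinRoot.aeval_eq, AdjoinRoot.mk_eq_zero.mpr hτdvd]
  have hβd : β ^ d = algebraMap K K' α := by
    have := hβP
    rw [hPdef] at this
    simp only [map_sub, map_pow, aeval_X, aeval_C, sub_eq_zero] at this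
    exact this
  -- finite dimensionality
  haveI : FiniteDimensional K K' := (AdjoinRoot.powerBasis hτ0).finite
  haveI : FiniteDimensional F K' := FiniteDimensional.trans F K K'
  have hfrKK' : Module.finrank K K' = d₁ := by
    rw [(AdjoinRoot.powerBasis hτ0).finrank]
    rfl
  have hfrFK : Module.finrank F K = m := by
    have := Module.card_eq_pow_finrank (K := F) (V := K)
    rw [hF, hK] at this
    exact (Nat.pow_right_injective hq1 this.symm)
  -- minpoly of α over F has degree m
  have hαint : IsIntegral F α := IsIntegral.of_finite F α
  have hmpα : (minpoly F α).natDegree = m := by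
    have hdvd : minpoly F α ∣ b := minpoly.dvd F α hroot
    obtain ⟨c, hc⟩ := hdvd
    rcases hbirr.isUnit_or_isUnit hc with h | h
    · exact absurd h (minpoly.not_isUnit F α)
    · have : c.natDegree = 0 := Polynomial.natDegree_eq_zero_of_isUnit h
      have hc0 : c ≠ 0 := fun hz => by
        rw [hz, mul_zero] at hc; exact hbirr.ne_zero hc
      rw [← hbdeg, hc, natDegree_mul (minpoly.ne_zero hαint) hc0, this, add_zero]
  -- the image of α in K'
  set α' : K' := algebraMap K K' α with hα'def
  have hinj : Function.Injective (algebraMap K K') := (algebraMap K K').injective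
  have hmpα' : minpoly F α' = minpoly F α := minpoly.algebraMap_eq hinj α
  -- K = F⟮α⟯
  have hKtop : F⟮α⟯ = (⊤ : IntermediateField F K) := by
    apply IntermediateField.eq_of_le_of_finrank_eq le_top
    rw [IntermediateField.adjoin.finrank hαint, hmpα, IntermediateField.finrank_top', hfrFK]
  -- F⟮β⟯ = ⊤ in K'
  have hβint : IsIntegral F β := IsIntegral.of_finite F β
  have hα'β : α' ∈ F⟮β⟯ := by
    rw [← hβd]
    exact pow_mem (IntermediateField.mem_adjoin_simple_self F β) d
  have hα'le : F⟮α'⟯ ≤ F⟮β⟯ := IntermediateField.adjoin_simple_le_iff.mpr hα'β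
  have hrange : ∀ k : K, algebraMap K K' k ∈ F⟮β⟯ := by
    intro k
    apply hα'le
    have hk : k ∈ F⟮α⟯ := hKtop ▸ IntermediateField.mem_top
    have : algebraMap K K' k ∈ (F⟮α⟯).map (IsScalarTower.toAlgHom F K K') :=
      ⟨k, hk, rfl⟩
    rwa [IntermediateField.adjoin_map, Set.image_singleton] at this
  have hβtop : F⟮β⟯ = (⊤ : IntermediateField F K') := by
    rw [eq_top_iff]
    rintro x -
    have hx : x ∈ Algebra.adjoin K {β} := by
      rw [AdjoinRoot.adjoinRoot_eq_top]; trivial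
    induction hx using Algebra.adjoin_induction with
    | mem y hy => rw [Set.mem_singleton_iff] at hy; subst hy
                  exact IntermediateField.mem_adjoin_simple_self F β
    | algebraMap k => exact hrange k
    | add x y _ _ hx hy => exact add_mem hx hy
    | mul x y _ _ hx hy => exact mul_mem hx hy
  -- degree of minpoly F β
  have hmpβ : (minpoly F β).natDegree = m * d₁ := by
    rw [← IntermediateField.adjoin.finrank hβint, hβtop, IntermediateField.finrank_top',
      ← Module.finrank_mul_finrank F K K', hfrFK, hfrKK']
  -- the factor f
  set f : Polynomial F := minpoly F β with hfdef
  have hfmonic : f.Monic := minpoly.monic hβint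
  have hfdvd : f ∣ b.comp (X ^ d) := by
    apply minpoly.dvd
    rw [aeval_comp]
    simp only [map_pow, aeval_X]
    rw [hβd, aeval_algebraMap_apply, hroot, map_zero]
  have hcompdeg : (b.comp (X ^ d)).natDegree = m * d := by
    rw [natDegree_comp, hbdeg, natDegree_X_pow]
  have hflt : f.natDegree < (b.comp (X ^ d)).natDegree := by
    rw [hcompdeg, hmpβ]
    exact mul_lt_mul_of_pos_left hd₁lt (by omega)
  have hfpos : 0 < f.natDegree := by rw [hmpβ]; positivity
  refine ⟨?_, d₁, hd₁lt, ⟨τ, hτirr, hτdvd, rfl⟩, f, hfmonic, hfdvd, hmpβ, hfpos, hflt⟩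
  intro hirr
  obtain ⟨c, hc⟩ := hfdvd
  rcases hirr.isUnit_or_isUnit hc with h | h
  · exact Polynomial.not_isUnit_of_natDegree_pos f hfpos h
  · have hc0 : c.natDegree = 0 := Polynomial.natDegree_eq_zero_of_isUnit h
    have hcne : c ≠ 0 := fun hz => by
      rw [hz, mul_zero] at hc; exact hirr.ne_zero hc
    have := hc ▸ hcompdeg
    rw [natDegree_mul hfmonic.ne_zero hcne, hc0, add_zero, hmpβ] at this
    omega
end
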